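/- arXiv:1603.06254 — 2 statements merged into one kernel-verified Lean document; each statement's English description precedes it below -/
import Mathlib

section
/- Let Ṽ, W̃ be n×r real matrices with W̃ᵀ Ṽ invertible, and let R_B, R_C be n×r matrices satisfying the Petrov–Galerkin orthogonality conditions W̃ᵀ R_B = 0 and Ṽᵀ R_C = 0. Define F = R_B (W̃ᵀ Ṽ)⁻¹ W̃ᵀ + Ṽ (W̃ᵀ Ṽ)⁻¹ R_Cᵀ. Then F Ṽ = R_B and W̃ᵀ F = R_Cᵀ. -/
open Matrix Kronecker

/-- Frobenius norm of a real matrix. -/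
noncomputable def frob {m n : Type*} [Fintype m] [Fintype n] (M : Matrix m n ℝ) : ℝ :=
  Real.sqrt (∑ i, ∑ j, (M i j)^2)

/-- Operator 2-norm of a real matrix. -/
noncomputable def op2 {m n : Type*} [Fintype m] [Fintype n] [DecidableEq n]
    (M : Matrix m n ℝ) : ℝ :=
  ‖LinearMap.toContinuousLinearMap (Matrix.toEuclideanLin M)‖

/-- Euclidean norm of a real vector. -/
noncomputable def evec {n : Type*} [Fintype n] (v : n → ℝ) : ℝ :=
  Real.sqrt (∑ i, (v i)^2)

/-- Vectorization of a matrix (stacking columns), indexed so that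
`(X ⊗ Y) (mvec Z) = mvec (Y * Z * Xᵀ)`. -/
def mvec {m n : Type*} (Z : Matrix m n ℝ) : n × m → ℝ := fun p => Z p.2 p.1

/-! `V (LV)⁻¹ L` is the oblique projection onto `range V` along `ker L`; each residual term
of the perturbation survives on exactly one side and is killed on the other by orthogonality. -/

namespace Matrix

variable {m k l : Type*} [Fintype m] [Fintype k] [DecidableEq k] {R : Type*} [CommRing R]

theorem mul_nonsing_inv_mul_mul_cancel (B : Matrix l k R) {L : Matrix k m R} {V : Matrix m k R}
    (h : IsUnit (L * V)) : B * (L * V)⁻¹ * L * V = B := by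
  rw [Matrix.mul_assoc _ L V, Matrix.mul_assoc, nonsing_inv_mul _ ((isUnit_iff_isUnit_det _).mp h),
    Matrix.mul_one]

theorem mul_mul_nonsing_inv_mul_cancel (C : Matrix k l R) {L : Matrix k m R} {V : Matrix m k R}
    (h : IsUnit (L * V)) : L * (V * (L * V)⁻¹ * C) = C := by
  rw [← Matrix.mul_assoc, ← Matrix.mul_assoc, mul_nonsing_inv _ ((isUnit_iff_isUnit_det _).mp h),
    Matrix.one_mul]

end Matrix

theorem stmt9 {n r : ℕ} (V W RB RC : Matrix (Fin n) (Fin r) ℝ)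
    (hinv : IsUnit (Wᵀ * V)) (hB : Wᵀ * RB = 0) (hC : Vᵀ * RC = 0) :
    (RB * (Wᵀ * V)⁻¹ * Wᵀ + V * (Wᵀ * V)⁻¹ * RCᵀ) * V = RB ∧
    Wᵀ * (RB * (Wᵀ * V)⁻¹ * Wᵀ + V * (Wᵀ * V)⁻¹ * RCᵀ) = RCᵀ := by
  have hCV : RCᵀ * V = 0 := by rw [← transpose_transpose V, ← transpose_mul, hC, transpose_zero]
  constructor
  · rw [Matrix.add_mul, mul_nonsing_inv_mul_mul_cancel RB hinv, Matrix.mul_assoc _ RCᵀ, hCV,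
      Matrix.mul_zero, add_zero]
  · rw [Matrix.mul_add, mul_mul_nonsing_inv_mul_cancel RCᵀ hinv, Matrix.mul_assoc RB,
      ← Matrix.mul_assoc, hB, Matrix.zero_mul, zero_add]
end

section
/- Let Ṽ, W̃ be n×r real matrices with W̃ᵀ Ṽ invertible, and R_B = [R_{B₁}, …, R_{B_r}], R_C = [R_{C₁}, …, R_{C_r}] be n×r matrices (columns R_{B_i}, R_{C_i}). Define F = R_B (W̃ᵀ Ṽ)⁻¹ W̃ᵀ + Ṽ (W̃ᵀ Ṽ)⁻¹ R_Cᵀ. Then ‖F‖₂ ≤ ‖F‖_F ≤ √r · ( max_i ‖R_{B_i}‖₂ · ‖(W̃ᵀ Ṽ)⁻¹ W̃ᵀ‖₂ + max_i ‖R_{C_i}‖₂ · ‖Ṽ (W̃ᵀ Ṽ)⁻¹‖₂ ). -/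
open Matrix Kronecker

/-! The triangle inequality for the Frobenius norm splits `F` into two products. In each, the
factor `R` keeps its Frobenius norm and the other factor contributes its operator norm, because
`‖X * M‖_F ≤ ‖X‖_F * ‖M‖₂` (apply `M` row by row). Finally `‖R‖_F²` is the sum of the `r` squared
column norms, which is at most `r * (max_i ‖R_i‖₂)²`. -/

section Frobenius

open scoped Matrix.Norms.Frobenius

variable {m n : Type*} [Fintype m] [Fintype n]

theorem frob_eq_norm (M : Matrix m n ℝ) : frob M = ‖M‖ := by
  rw [frobenius_norm_def, ← Real.sqrt_eq_rpow, frob]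
  simp only [Real.norm_eq_abs, Real.rpow_two, sq_abs]

theorem frob_nonneg (M : Matrix m n ℝ) : 0 ≤ frob M := Real.sqrt_nonneg _

theorem frob_add_le (A B : Matrix m n ℝ) : frob (A + B) ≤ frob A + frob B := by
  simpa only [frob_eq_norm] using norm_add_le A B

theorem frob_transpose (M : Matrix m n ℝ) : frob Mᵀ = frob M := by
  simpa only [frob_eq_norm] using frobenius_norm_transpose M

end Frobenius

section Euclidean

variable {l m n : Type*} [Fintype l] [Fintype m] [Fintype n]

theorem evec_nonneg (v : n → ℝ) : 0 ≤ evec v := Real.sqrt_nonneg _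

theorem sq_evec (v : n → ℝ) : evec v ^ 2 = ∑ i, v i ^ 2 :=
  Real.sq_sqrt (by positivity)

theorem evec_eq_norm (v : n → ℝ) : evec v = ‖WithLp.toLp 2 v‖ := by
  simp only [evec, EuclideanSpace.norm_eq, Real.norm_eq_abs, sq_abs]

theorem abs_dotProduct_le_evec_mul (u v : n → ℝ) : |u ⬝ᵥ v| ≤ evec u * evec v := by
  rw [evec_eq_norm, evec_eq_norm, mul_comm]
  exact abs_real_inner_le_norm (WithLp.toLp 2 v) (WithLp.toLp 2 u)

theorem sq_frob_eq_sum_sq_evec_row (M : Matrix m n ℝ) : frob M ^ 2 = ∑ i, evec (M i) ^ 2 := by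
  simp only [sq_evec, frob]
  exact Real.sq_sqrt (by positivity)

theorem sq_frob_eq_sum_sq_evec_col (M : Matrix m n ℝ) :
    frob M ^ 2 = ∑ j, evec (fun i => M i j) ^ 2 := by
  rw [← frob_transpose]
  exact sq_frob_eq_sum_sq_evec_row Mᵀ

theorem evec_mulVec_le_frob_mul (M : Matrix m n ℝ) (x : n → ℝ) :
    evec (M *ᵥ x) ≤ frob M * evec x := by
  refine pow_le_pow_iff_left₀ (evec_nonneg _) (mul_nonneg (frob_nonneg M) (evec_nonneg x))
    two_ne_zero |>.mp ?_
  rw [mul_pow, sq_frob_eq_sum_sq_evec_row, Finset.sum_mul, sq_evec]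
  refine Finset.sum_le_sum fun i _ => ?_
  rw [← mul_pow, ← sq_abs]
  exact pow_le_pow_left₀ (abs_nonneg _) (abs_dotProduct_le_evec_mul (M i) x) 2

theorem op2_le_frob [DecidableEq n] (M : Matrix m n ℝ) : op2 M ≤ frob M :=
  ContinuousLinearMap.opNorm_le_bound _ (frob_nonneg M) fun x => by
    have := evec_mulVec_le_frob_mul M x.ofLp
    rwa [evec_eq_norm, evec_eq_norm] at this

section L2Operator

open scoped Matrix.Norms.L2Operator

theorem op2_eq_norm [DecidableEq n] (M : Matrix m n ℝ) : op2 M = ‖M‖ := rfl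

theorem op2_nonneg [DecidableEq n] (M : Matrix m n ℝ) : 0 ≤ op2 M := norm_nonneg _

theorem op2_transpose [DecidableEq m] [DecidableEq n] (M : Matrix m n ℝ) :
    op2 Mᵀ = op2 M := by
  rw [op2_eq_norm, op2_eq_norm, ← l2_opNorm_conjTranspose M, conjTranspose_eq_transpose_of_trivial]

theorem evec_mulVec_le_op2_mul [DecidableEq n] (M : Matrix m n ℝ) (x : n → ℝ) :
    evec (M *ᵥ x) ≤ op2 M * evec x := by
  rw [evec_eq_norm, evec_eq_norm]
  exact l2_opNorm_mulVec M (WithLp.toLp 2 x)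

end L2Operator

theorem evec_vecMul_le_mul_op2 [DecidableEq m] [DecidableEq n] (x : m → ℝ) (M : Matrix m n ℝ) :
    evec (x ᵥ* M) ≤ evec x * op2 M := by
  rw [← mulVec_transpose, mul_comm, ← op2_transpose]
  exact evec_mulVec_le_op2_mul Mᵀ x

theorem frob_mul_le_frob_mul_op2 [DecidableEq m] [DecidableEq n]
    (X : Matrix l m ℝ) (M : Matrix m n ℝ) : frob (X * M) ≤ frob X * op2 M := by
  refine pow_le_pow_iff_left₀ (frob_nonneg _) (mul_nonneg (frob_nonneg X) (op2_nonneg M))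
    two_ne_zero |>.mp ?_
  rw [mul_pow, sq_frob_eq_sum_sq_evec_row, sq_frob_eq_sum_sq_evec_row, Finset.sum_mul]
  refine Finset.sum_le_sum fun i _ => ?_
  rw [← mul_pow, mul_apply_eq_vecMul]
  exact pow_le_pow_left₀ (evec_nonneg _) (evec_vecMul_le_mul_op2 (X i) M) 2

theorem frob_mul_le_op2_mul_frob [DecidableEq l] [DecidableEq m]
    (M : Matrix l m ℝ) (X : Matrix m n ℝ) : frob (M * X) ≤ op2 M * frob X := by
  rw [← frob_transpose, transpose_mul, ← frob_transpose X, ← op2_transpose M, mul_comm]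
  exact frob_mul_le_frob_mul_op2 Xᵀ Mᵀ

theorem frob_le_sqrt_card_mul_iSup_evec_col (X : Matrix m n ℝ) :
    frob X ≤ √(Fintype.card n) * ⨆ j, evec (fun i => X i j) := by
  set s := ⨆ j, evec (fun i => X i j)
  have hs : 0 ≤ s := Real.iSup_nonneg fun j => evec_nonneg _
  refine pow_le_pow_iff_left₀ (frob_nonneg X) (mul_nonneg (Real.sqrt_nonneg _) hs)
    two_ne_zero |>.mp ?_
  rw [mul_pow, Real.sq_sqrt (Nat.cast_nonneg _), sq_frob_eq_sum_sq_evec_col]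
  calc ∑ j, evec (fun i => X i j) ^ 2 ≤ ∑ _j : n, s ^ 2 :=
        Finset.sum_le_sum fun j _ => pow_le_pow_left₀ (evec_nonneg _)
          (le_ciSup (f := fun j => evec fun i => X i j) (Set.finite_range _).bddAbove j) 2
    _ = Fintype.card n * s ^ 2 := by simp

end Euclidean

theorem stmt10_general {n r : ℕ} (V W RB RC : Matrix (Fin n) (Fin r) ℝ) :
    op2 (RB * (Wᵀ * V)⁻¹ * Wᵀ + V * (Wᵀ * V)⁻¹ * RCᵀ) ≤
      frob (RB * (Wᵀ * V)⁻¹ * Wᵀ + V * (Wᵀ * V)⁻¹ * RCᵀ) ∧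
    frob (RB * (Wᵀ * V)⁻¹ * Wᵀ + V * (Wᵀ * V)⁻¹ * RCᵀ) ≤
      Real.sqrt r * ((⨆ i : Fin r, evec (fun j => RB j i)) * op2 ((Wᵀ * V)⁻¹ * Wᵀ)
        + (⨆ i : Fin r, evec (fun j => RC j i)) * op2 (V * (Wᵀ * V)⁻¹)) := by
  refine ⟨op2_le_frob _, ?_⟩
  set P := (Wᵀ * V)⁻¹
  have hRB := frob_le_sqrt_card_mul_iSup_evec_col RB
  have hRC := frob_le_sqrt_card_mul_iSup_evec_col RC
  rw [Fintype.card_fin] at hRB hRC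
  calc frob (RB * P * Wᵀ + V * P * RCᵀ)
      ≤ frob (RB * (P * Wᵀ)) + frob (V * P * RCᵀ) := by
        rw [Matrix.mul_assoc RB]; exact frob_add_le _ _
    _ ≤ frob RB * op2 (P * Wᵀ) + op2 (V * P) * frob RC := by
        grw [frob_mul_le_frob_mul_op2, frob_mul_le_op2_mul_frob, frob_transpose]
    _ ≤ √r * (⨆ i, evec fun j => RB j i) * op2 (P * Wᵀ)
        + op2 (V * P) * (√r * ⨆ i, evec fun j => RC j i) := by
        gcongr <;> exact op2_nonneg _
    _ = _ := by ring

theorem stmt10 {n r : ℕ} (V W RB RC : Matrix (Fin n) (Fin r) ℝ)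
    (hinv : IsUnit (Wᵀ * V)) :
    op2 (RB * (Wᵀ * V)⁻¹ * Wᵀ + V * (Wᵀ * V)⁻¹ * RCᵀ) ≤
      frob (RB * (Wᵀ * V)⁻¹ * Wᵀ + V * (Wᵀ * V)⁻¹ * RCᵀ) ∧
    frob (RB * (Wᵀ * V)⁻¹ * Wᵀ + V * (Wᵀ * V)⁻¹ * RCᵀ) ≤
      Real.sqrt r * ((⨆ i : Fin r, evec (fun j => RB j i)) * op2 ((Wᵀ * V)⁻¹ * Wᵀ)
        + (⨆ i : Fin r, evec (fun j => RC j i)) * op2 (V * (Wᵀ * V)⁻¹)) :=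
  stmt10_general V W RB RC
end
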